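/- arXiv:2509.17013 — 10 statements merged into one kernel-verified Lean document; each statement's English description precedes it below -/
import Mathlib

section
/- For every integer k ≥ 2 and every finite coloring of any k-IP-set A ⊆ ℕ, there exists a monochromatic arithmetic progression of length k contained in A; that is, there exist a, d ∈ ℕ (d > 0) such that the set {a, a+d, a+2d, ..., a+(k-1)d} is contained in A and all its elements receive the same color. -/
/-- `FSk k x` is the set of all finite sums `∑ εᵢ xᵢ` with each `εᵢ ∈ {0,…,k-1}`,
excluding `0`. -/
def FSk (k : ℕ) (x : ℕ → ℕ) : Set ℕ :=
  {s | ∃ n : ℕ, ∃ ε : Fin n → ℕ, (∀ i, ε i < k) ∧ s = ∑ i, ε i * x i} \ {0}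

/-- A `k`-IP-set: a set of positive integers containing `FSk k x` for some
strictly increasing sequence of positive integers. -/
def IsKIPSet (k : ℕ) (A : Set ℕ) : Prop :=
  ∃ x : ℕ → ℕ, StrictMono x ∧ (∀ i, 0 < x i) ∧ FSk k x ⊆ A

/-- Sums of the form `x m + ∑ εᵢ x i` (over `i < m`) with coefficients `< k` lie in `FSk k x`. -/
lemma mem_FSk_of_sum (k : ℕ) (hk : 2 ≤ k) (x : ℕ → ℕ) (hx : ∀ i, 0 < x i)
    (m : ℕ) (f : Fin m → ℕ) (hf : ∀ i, f i < k) :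
    x m + ∑ i : Fin m, f i * x i ∈ FSk k x := by
  constructor
  · refine ⟨m + 1, fun j => if h : (j : ℕ) < m then f ⟨j, h⟩ else 1, ?_, ?_⟩
    · intro i
      dsimp only
      split
      · exact hf _
      · omega
    · rw [Fin.sum_univ_castSucc]
      simp only [Fin.coe_castSucc, Fin.is_lt, dif_pos, Fin.val_last, lt_irrefl, dif_neg,
        one_mul, Fin.eta, Fin.val_last]
      simp [add_comm]
  · simp only [Set.mem_singleton_iff]
    have := hx m
    omega

/-- For every `k ≥ 2` and every finite coloring of any `k`-IP-set `A`, there is a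
monochromatic arithmetic progression of length `k` contained in `A`. -/
theorem stmt0 (k : ℕ) (hk : 2 ≤ k) (A : Set ℕ) (hA : IsKIPSet k A)
    (r : ℕ) (c : ℕ → Fin r) :
    ∃ a d : ℕ, 0 < a ∧ 0 < d ∧ (∀ j < k, a + j * d ∈ A) ∧
      (∀ j < k, c (a + j * d) = c a) := by
  obtain ⟨x, hmono, hx, hsub⟩ := hA
  obtain ⟨ι, ιfin, hHJ⟩ := Combinatorics.Line.exists_mono_in_high_dimension (Fin k) (Fin r)
  set m := Fintype.card ι with hm
  let e : ι ≃ Fin m := Fintype.equivFin ι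
  -- the coloring of the cube
  obtain ⟨l, c₀, hl⟩ := hHJ (fun ε => c (x m + ∑ i : ι, (ε i : ℕ) * x (e i)))
  have hk0 : 0 < k := by omega
  let z : Fin k := ⟨0, hk0⟩
  -- value of the line at t, as a natural number sum
  set a : ℕ := x m + ∑ i : ι, ((l z i : ℕ)) * x (e i) with ha
  set d : ℕ := ∑ i : ι, (if l.idxFun i = none then 1 else 0) * x (e i) with hd
  have key : ∀ t : Fin k, x m + ∑ i : ι, ((l t i : ℕ)) * x (e i) = a + (t : ℕ) * d := by
    intro t
    rw [ha, hd, Finset.mul_sum, add_assoc, ← Finset.sum_add_distrib]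
    congr 1
    apply Finset.sum_congr rfl
    intro i _
    rcases h : l.idxFun i with _ | v
    · rw [Combinatorics.Line.apply_none _ _ _ h, Combinatorics.Line.apply_none _ _ _ h]
      simp only [if_pos]
      show (t : ℕ) * x (e i) = (z : ℕ) * x (e i) + (t : ℕ) * (1 * x (e i))
      simp [z]
    · rw [Combinatorics.Line.apply_some h, Combinatorics.Line.apply_some h]
      simp [h]
  -- the wildcard set is nonempty, so d > 0
  have hd0 : 0 < d := by
    obtain ⟨i, hi⟩ := l.proper
    rw [hd]
    refine Finset.sum_pos' (fun j _ => Nat.zero_le _) ⟨i, Finset.mem_univ i, ?_⟩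
    rw [if_pos hi, one_mul]
    exact hx _
  have memA : ∀ t : Fin k, a + (t : ℕ) * d ∈ A := by
    intro t
    rw [← key t]
    -- reindex the sum over ι to a sum over Fin m
    have : ∑ i : ι, ((l t i : ℕ)) * x (e i)
        = ∑ j : Fin m, ((l t (e.symm j) : ℕ)) * x j := by
      rw [← Equiv.sum_comp e (fun j => ((l t (e.symm j) : ℕ)) * x j)]
      simp
    rw [this]
    exact hsub (mem_FSk_of_sum k hk x hx m _ (fun j => (l t (e.symm j)).isLt))
  have hcol : ∀ t : Fin k, c (a + (t : ℕ) * d) = c₀ := by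
    intro t
    rw [← key t]
    exact hl t
  have ha0 : 0 < a := by
    have := hx m; rw [ha]; omega
  have haz : a + (z : ℕ) * d = a := by simp [z]
  refine ⟨a, d, ha0, hd0, ?_, ?_⟩
  · intro j hj
    simpa using memA ⟨j, hj⟩
  · intro j hj
    have h1 := hcol ⟨j, hj⟩
    have h2 := hcol z
    rw [haz] at h2
    simp only [Fin.val_mk] at h1 ⊢
    rw [h1, h2]
end

section
/- For every integer k ≥ 2, there exists a k-IP-set that contains no arithmetic progression of length k+1; that is, there is a strictly increasing sequence (x_i)_{i≥1} of positive integers such that no set of the form {a, a+d, a+2d, ..., a+kd} with a, d ∈ ℕ, d > 0, is contained in FS^k((x_i)). -/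
namespace Nat

lemma mul_add_div_pow_succ_mod {p e : ℕ} (he : e < p) (s t : ℕ) :
    (p * s + e) / p ^ (t + 1) % p = s / p ^ t % p := by
  have hp : 0 < p := zero_lt_of_lt he
  rw [pow_succ', ← Nat.div_div_eq_div_mul, Nat.mul_add_div hp, Nat.div_eq_of_lt he, add_zero]

lemma sum_mul_pow_div_pow_mod_lt {p k : ℕ} (hk : 0 < k) (hkp : k ≤ p) :
    ∀ {n : ℕ} (ε : Fin n → ℕ), (∀ i, ε i < k) → ∀ t, (∑ i, ε i * p ^ (i : ℕ)) / p ^ t % p < k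
  | 0, _, _, t => by simpa using hk
  | n + 1, ε, hε, t => by
    have hsum : ∑ i, ε i * p ^ (i : ℕ) = p * ∑ i : Fin n, ε i.succ * p ^ (i : ℕ) + ε 0 := by
      rw [Fin.sum_univ_succ, Finset.mul_sum]
      simp only [Fin.val_zero, pow_zero, mul_one, Fin.val_succ, pow_succ]
      rw [add_comm]
      congr 1
      exact Finset.sum_congr rfl fun i _ => by ring
    rw [hsum]
    cases t with
    | zero => simpa [Nat.mod_eq_of_lt ((hε 0).trans_le hkp)] using hε 0
    | succ t =>
      rw [mul_add_div_pow_succ_mod ((hε 0).trans_le hkp)]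
      exact sum_mul_pow_div_pow_mod_lt hk hkp (fun i => ε i.succ) (fun i => hε i.succ) t

lemma exists_le_add_mul_mod {p e : ℕ} (hp : p.Prime) (he : ¬ p ∣ e) (c : ℕ) {k : ℕ}
    (hkp : k < p) : ∃ j ≤ k, k ≤ (c + j * e) % p := by
  by_contra! hlt
  have hmaps : Set.MapsTo (fun j => (c + j * e) % p) (Finset.range (k + 1)) (Finset.range k) :=
    fun j hj => by simpa using hlt j (by simpa [Nat.lt_succ_iff] using hj)
  obtain ⟨i, hi, j, hj, hij, hmod⟩ :=
    Finset.exists_ne_map_eq_of_card_lt_of_maps_to (by simp) hmaps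
  have hij' : i ≡ j [MOD p] :=
    (Nat.ModEq.add_left_cancel' c hmod).cancel_right_of_coprime (hp.coprime_iff_not_dvd.mpr he)
  simp only [Finset.mem_range] at hi hj
  exact hij (hij'.eq_of_lt_of_lt (by omega) (by omega))

end Nat

lemma div_pow_mod_lt_of_mem_FSk {p k s : ℕ} (hkp : k ≤ p) (hs : s ∈ FSk k (p ^ ·)) (t : ℕ) :
    s / p ^ t % p < k := by
  obtain ⟨⟨n, ε, hε, rfl⟩, hs0⟩ := hs
  have hk : 0 < k := by
    rcases n with _ | n
    · simp at hs0
    · exact Nat.zero_lt_of_lt (hε 0)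
  exact Nat.sum_mul_pow_div_pow_mod_lt hk hkp ε hε t

theorem stmt2_general (k : ℕ) :
    ∃ x : ℕ → ℕ, StrictMono x ∧ (∀ i, 0 < x i) ∧
      ¬ ∃ a d : ℕ, 0 < a ∧ 0 < d ∧ ∀ j ≤ k, a + j * d ∈ FSk k x := by
  obtain ⟨p, hkp, hp⟩ := Nat.exists_infinite_primes (k + 1)
  refine ⟨(p ^ ·), pow_right_strictMono₀ hp.one_lt, fun i => pow_pos hp.pos i, ?_⟩
  rintro ⟨a, d, -, hd, hAP⟩
  obtain ⟨v, e, he, rfl⟩ := Nat.exists_eq_pow_mul_and_not_dvd hd.ne' p hp.ne_one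
  obtain ⟨j, hj, hkj⟩ := Nat.exists_le_add_mul_mod hp he (a / p ^ v) hkp
  have hdigit := div_pow_mod_lt_of_mem_FSk (by omega) (hAP j hj) v
  rw [mul_left_comm, Nat.add_mul_div_left _ _ (pow_pos hp.pos v)] at hdigit
  omega

/-- For every `k ≥ 2` there is a `k`-IP-set (namely `FSk k x` for a suitable strictly
increasing sequence `x` of positive integers) containing no arithmetic progression of
length `k + 1`. -/
theorem stmt2 (k : ℕ) (hk : 2 ≤ k) :
    ∃ x : ℕ → ℕ, StrictMono x ∧ (∀ i, 0 < x i) ∧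
      ¬ ∃ a d : ℕ, 0 < a ∧ 0 < d ∧ ∀ j ≤ k, a + j * d ∈ FSk k x :=
  stmt2_general k
end

section
/- Let A be an l × n matrix with integer entries and columns a_1, ..., a_n ∈ ℤ^l. The following are equivalent: (1) for every IP-set Y ⊆ ℕ and every finite coloring of Y, there exist x_1, ..., x_n ∈ Y, all of the same color, with x_1 a_1 + ⋯ + x_n a_n = 0 (the zero vector); (2) there exist m ∈ ℕ and subsets I_1, ..., I_m ⊆ {1,...,n} such that I_1 ∪ ⋯ ∪ I_m = {1,...,n} and for every j ∈ {1,...,m}, Σ_{i ∈ I_j} a_i = 0. -/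
/-!
(2) ⇒ (1): by Hindman's theorem a finitely coloured IP-set `FS(a)` contains a monochromatic
`FS(y)`. Put `xᵢ = ∑_{j : i ∈ I_j} y_j`; each `xᵢ` is a nonempty finite sum of the `y_j`, hence
lies in `FS(y)`, and `∑ᵢ xᵢ aᵢ = ∑_j y_j ∑_{i ∈ I_j} aᵢ = 0`.

(1) ⇒ (2): take the IP-set `FS(bˢ)` with a single colour, where `b` exceeds `∑ᵢ |A t i|` for
every row `t`. A solution has `xᵢ = ∑_{s ∈ Sᵢ} bˢ`, so `∑ᵢ xᵢ aᵢ = ∑ₛ bˢ ∑_{i : s ∈ Sᵢ} aᵢ`. The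
coefficients are smaller than `b` in absolute value, so uniqueness of base-`b` expansions
(with signed digits) makes each of them vanish, and the sets `{i : s ∈ Sᵢ}` are the required
cover.
-/

open Finset

theorem sum_sum_mul_comm {ι κ R : Type*} [Fintype ι] [DecidableEq κ] [CommSemiring R]
    (S : ι → Finset κ) (T : Finset κ) (hST : ∀ i, S i ⊆ T) (w : κ → R) (a : ι → R) :
    ∑ i, (∑ s ∈ S i, w s) * a i = ∑ s ∈ T, (∑ i with s ∈ S i, a i) * w s := by
  simp_rw [sum_mul, mul_comm (w _)]
  exact sum_comm' fun i s => by
    simpa only [mem_univ, true_and, mem_filter] using ⟨fun h => ⟨h, hST i h⟩, And.left⟩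

theorem eq_zero_of_sum_mul_pow_eq_zero {b : ℤ} {N : ℕ} {c : ℕ → ℤ} (hc : ∀ s < N, |c s| < b)
    (h : ∑ s ∈ range N, c s * b ^ s = 0) : ∀ s < N, c s = 0 := by
  induction N generalizing c with
  | zero => omega
  | succ N ih =>
    set tail := ∑ s ∈ range N, c (s + 1) * b ^ s
    have hsplit : ∑ s ∈ range (N + 1), c s * b ^ s = b * tail + c 0 := by
      rw [sum_range_succ', mul_sum, pow_zero, mul_one]
      exact congrArg (· + c 0) (sum_congr rfl fun s _ => by ring)
    rw [hsplit] at h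
    have hc0 : c 0 = 0 := Int.eq_zero_of_abs_lt_dvd ⟨-tail, by linarith⟩ (hc 0 N.succ_pos)
    have hb : b ≠ 0 := (lt_of_le_of_lt (abs_nonneg _) (hc 0 N.succ_pos)).ne'
    have htail : tail = 0 := (mul_eq_zero.mp (by linarith)).resolve_left hb
    rintro (_ | s) hs
    · exact hc0
    · exact ih (c := fun s => c (s + 1)) (fun s hs => hc _ (by omega)) htail s (by omega)

theorem Hindman.FS.exists_finset_sum {M : Type*} [AddCommMonoid M] {a : Stream' M} {m : M}
    (h : m ∈ FS a) : ∃ F : Finset ℕ, F.Nonempty ∧ m = ∑ j ∈ F, a.get j := by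
  induction h with
  | head' a => exact ⟨{0}, singleton_nonempty 0, by simp [Stream'.head]⟩
  | tail' a m _ ih =>
    obtain ⟨F, hF, rfl⟩ := ih
    exact ⟨F.map (addRightEmbedding 1), hF.map, by simp [Stream'.get_tail]⟩
  | cons' a m _ ih =>
    obtain ⟨F, -, rfl⟩ := ih
    refine ⟨insert 0 (F.map (addRightEmbedding 1)), insert_nonempty _ _, ?_⟩
    rw [sum_insert (by simp)]
    simp [Stream'.get_tail, Stream'.head]

theorem Hindman.exists_FS_subset_inter_preimage_singleton {M κ : Type*} [AddSemigroup M]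
    [Finite κ] (a : Stream' M) (c : M → κ) : ∃ k, ∃ b : Stream' M, FS b ⊆ FS a ∩ c ⁻¹' {k} := by
  obtain ⟨_, ⟨k, rfl⟩, hb⟩ := FS_partition_regular a (Set.range fun k => FS a ∩ c ⁻¹' {k})
    (Set.finite_range _) fun y hy => ⟨_, ⟨c y, rfl⟩, hy, rfl⟩
  exact ⟨k, hb⟩

theorem exists_finset_sum_of_mem_FSk_two {x : ℕ → ℕ} {s : ℕ} (hs : s ∈ FSk 2 x) :
    ∃ F : Finset ℕ, F.Nonempty ∧ s = ∑ j ∈ F, x j := by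
  obtain ⟨⟨n, ε, hε, rfl⟩, hs⟩ := hs
  have hbit : ∀ i, ε i * x i = if ε i = 1 then x i else 0 := fun i => by
    have := hε i
    interval_cases ε i <;> simp
  have hsum : ∑ i, ε i * x i = ∑ j ∈ ({i | ε i = 1} : Finset _).map Fin.valEmbedding, x j := by
    rw [sum_map, sum_filter]
    exact sum_congr rfl fun i _ => hbit i
  exact ⟨_, nonempty_of_sum_ne_zero (hsum ▸ hs), hsum⟩

theorem sum_mem_FSk_two {x : ℕ → ℕ} (hx : ∀ i, 0 < x i) {F : Finset ℕ} (hF : F.Nonempty) :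
    ∑ j ∈ F, x j ∈ FSk 2 x := by
  obtain ⟨N, hN⟩ := F.exists_nat_subset_range
  refine ⟨⟨N, fun i => if (i : ℕ) ∈ F then 1 else 0,
    fun i => by beta_reduce; split_ifs <;> omega, ?_⟩, (sum_pos (fun i _ => hx i) hF).ne'⟩
  rw [Fin.sum_univ_eq_sum_range (fun i => (if i ∈ F then 1 else 0) * x i)]
  simp only [ite_mul, one_mul, zero_mul, sum_ite_mem, inter_eq_right.mpr hN]

theorem Hindman.FS_subset_FSk_two {x : ℕ → ℕ} (hx : ∀ i, 0 < x i) : FS x ⊆ FSk 2 x := by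
  intro s hs
  obtain ⟨F, hF, rfl⟩ := FS.exists_finset_sum hs
  exact sum_mem_FSk_two hx hF

theorem exists_zero_sum_cover_of_solution_in_FSk_two_pow {l n b : ℕ}
    (A : Matrix (Fin l) (Fin n) ℤ) (hb : ∀ t, ∑ i, |A t i| < b) {x : Fin n → ℕ}
    (hx : ∀ i, x i ∈ FSk 2 (b ^ ·)) (hAx : ∀ t, ∑ i, (x i : ℤ) * A t i = 0) :
    ∃ m : ℕ, 0 < m ∧ ∃ I : Fin m → Finset (Fin n),
      (∀ i : Fin n, ∃ j, i ∈ I j) ∧ ∀ j, ∀ t : Fin l, ∑ i ∈ I j, A t i = 0 := by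
  choose S hS hxS using fun i => exists_finset_sum_of_mem_FSk_two (hx i)
  obtain ⟨N, hN⟩ := (univ.biUnion S).exists_nat_subset_range
  have hSN : ∀ i, S i ⊆ range (N + 1) := fun i =>
    (subset_biUnion_of_mem S (mem_univ i)).trans (hN.trans (range_subset_range.2 N.le_succ))
  refine ⟨N + 1, N.succ_pos, fun s => {i | (s : ℕ) ∈ S i}, fun i => ?_, fun s t => ?_⟩
  · obtain ⟨s, hs⟩ := hS i
    exact ⟨⟨s, mem_range.1 (hSN i hs)⟩, by simpa using hs⟩
  have hdigit_bound : ∀ s, |∑ i with s ∈ S i, A t i| < b := fun s =>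
    calc |∑ i with s ∈ S i, A t i| ≤ ∑ i with s ∈ S i, |A t i| := abs_sum_le_sum_abs _ _
      _ ≤ ∑ i, |A t i| := sum_le_sum_of_subset_of_nonneg (filter_subset _ _)
          fun i _ _ => abs_nonneg _
      _ < b := hb t
  have hexpansion : ∑ s ∈ range (N + 1), (∑ i with s ∈ S i, A t i) * (b : ℤ) ^ s = 0 := by
    rw [← sum_sum_mul_comm S _ hSN, ← hAx t]
    simp [hxS]
  exact eq_zero_of_sum_mul_pow_eq_zero (fun s _ => hdigit_bound s) hexpansion s s.isLt

theorem exists_monochromatic_solution_in_FSk_two_of_zero_sum_cover {l n m : ℕ} {κ : Type*}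
    [Finite κ] (A : Matrix (Fin l) (Fin n) ℤ) (I : Fin m → Finset (Fin n))
    (hcov : ∀ i : Fin n, ∃ j, i ∈ I j) (hI : ∀ j, ∀ t : Fin l, ∑ i ∈ I j, A t i = 0)
    {a : ℕ → ℕ} (ha : ∀ i, 0 < a i) (c : ℕ → κ) :
    ∃ x : Fin n → ℕ, (∀ i, x i ∈ FSk 2 a) ∧ (∀ i i', c (x i) = c (x i')) ∧
      ∀ t : Fin l, ∑ i, (x i : ℤ) * A t i = 0 := by
  obtain ⟨k, y, hy⟩ := Hindman.exists_FS_subset_inter_preimage_singleton a c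
  set J : Fin n → Finset (Fin m) := fun i => {j | i ∈ I j}
  have hxy : ∀ i, ∑ j ∈ J i, y.get j ∈ Hindman.FS a ∩ c ⁻¹' {k} := fun i => by
    obtain ⟨j, hj⟩ := hcov i
    have hsum := Hindman.FS.finsetSum y ((J i).map Fin.valEmbedding)
      (Finset.Nonempty.map ⟨j, by simpa [J] using hj⟩)
    rw [sum_map] at hsum
    exact hy hsum
  refine ⟨fun i => ∑ j ∈ J i, y.get j, fun i => Hindman.FS_subset_FSk_two ha (hxy i).1,
    fun i i' => (hxy i).2.trans (hxy i').2.symm, fun t => ?_⟩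
  have hswap := sum_sum_mul_comm J univ (fun _ => subset_univ _) (fun j => (y.get j : ℤ)) (A t)
  push_cast
  rw [hswap]
  exact sum_eq_zero fun j _ => by simp [J, hI]

/-- Rado's theorem on IP-sets: the system `A x = 0` (with columns `aᵢ = A · i`) has a
monochromatic solution for every finite coloring of any IP-set iff there are sets
`I₁,…,I_m` covering `{1,…,n}` with `∑_{i ∈ I_j} aᵢ = 0` for every `j`. -/
theorem stmt6 (l n : ℕ) (A : Matrix (Fin l) (Fin n) ℤ) :
    (∀ Y : Set ℕ, IsKIPSet 2 Y → ∀ (r : ℕ) (c : ℕ → Fin r),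
      ∃ x : Fin n → ℕ, (∀ i, x i ∈ Y) ∧ (∀ i i', c (x i) = c (x i')) ∧
        ∀ t : Fin l, ∑ i, (x i : ℤ) * A t i = 0) ↔
    (∃ m : ℕ, 0 < m ∧ ∃ I : Fin m → Finset (Fin n),
      (∀ i : Fin n, ∃ j, i ∈ I j) ∧
      ∀ j, ∀ t : Fin l, ∑ i ∈ I j, A t i = 0) := by
  constructor
  · intro H
    set b := ∑ t, ∑ i, (A t i).natAbs + 2
    have hb : ∀ t, ∑ i, |A t i| < b := fun t =>
      calc ∑ i, |A t i| = ((∑ i, (A t i).natAbs : ℕ) : ℤ) := by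
            push_cast [Int.natCast_natAbs]; rfl
        _ ≤ ((∑ t, ∑ i, (A t i).natAbs : ℕ) : ℤ) := by
          exact_mod_cast single_le_sum (f := fun t => ∑ i, (A t i).natAbs)
            (fun _ _ => Nat.zero_le _) (mem_univ t)
        _ < b := by simp only [b]; omega
    have hIP : IsKIPSet 2 (FSk 2 (b ^ ·)) :=
      ⟨_, pow_right_strictMono₀ (by omega), fun s => by positivity, subset_rfl⟩
    obtain ⟨x, hx, -, hAx⟩ := H _ hIP 1 0
    exact exists_zero_sum_cover_of_solution_in_FSk_two_pow A hb hx hAx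
  · rintro ⟨m, -, I, hcov, hI⟩ Y ⟨a, -, ha, haY⟩ r c
    obtain ⟨x, hxa, hxc, hAx⟩ :=
      exists_monochromatic_solution_in_FSk_two_of_zero_sum_cover A I hcov hI ha c
    exact ⟨x, fun i => haY (hxa i), hxc, hAx⟩
end

section
/- Let A be an l × n matrix with integer entries and columns a_1, ..., a_n ∈ ℤ^l. The following are equivalent: (1) for every IP-set Y ⊆ ℕ and every finite coloring of Y, there exist pairwise distinct x_1, ..., x_n ∈ Y, all of the same color, with x_1 a_1 + ⋯ + x_n a_n = 0; (2) there exist m ∈ ℕ and subsets I_1, ..., I_m ⊆ {1,...,n} such that I_1 ∪ ⋯ ∪ I_m = {1,...,n}, for every j ∈ {1,...,m} Σ_{i ∈ I_j} a_i = 0, and for all i ≠ i' in {1,...,n} there exists j ∈ {1,...,m} such that exactly one of i, i' belongs to I_j. -/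
/-!
If the sets `I_j` exist, Hindman's theorem gives a sequence `b` whose finite sums are
monochromatic and lie in the IP-set. Summing `b` over consecutive, fast-growing blocks yields a
superincreasing sequence `y` with all its finite sums still in `FS b`; then
`x_i = ∑_{j : i ∈ I_j} y_j` solves `A x = 0`, and its entries are distinct because the `I_j`
separate indices and distinct subsets of a superincreasing sequence have distinct sums.

Conversely, colour the IP-set `FS(B^k)` trivially, with `B` larger than every
`|∑_{i ∈ F} a_{ti}|`. A solution `x_i = ∑_{k ∈ S_i} B^k` gives
`∑_k B^k ∑_{i : k ∈ S_i} a_i = 0`, a base-`B` expansion with digits smaller than `B`, so every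
digit vanishes and `I_k = {i | k ∈ S_i}` is the required family.
-/

open Finset

section Superincreasing

variable {y : ℕ → ℕ}

lemma sum_lt_of_subset_range (hy : ∀ N, ∑ k ∈ range N, y k < y N) {S : Finset ℕ} {N : ℕ}
    (hS : S ⊆ range N) : ∑ k ∈ S, y k < y N :=
  (sum_le_sum_of_subset hS).trans_lt (hy N)

lemma sum_injective_of_superincreasing (hy : ∀ N, ∑ k ∈ range N, y k < y N) :
    Function.Injective fun S : Finset ℕ => ∑ k ∈ S, y k := by
  suffices ∀ N, ∀ S ⊆ range N, ∀ T ⊆ range N,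
      ∑ k ∈ S, y k = ∑ k ∈ T, y k → S = T by
    intro S T hST
    obtain ⟨N, hN⟩ := (S ∪ T).exists_nat_subset_range
    exact this N S (subset_union_left.trans hN) T (subset_union_right.trans hN) hST
  intro N
  induction N with
  | zero => simp
  | succ N ih =>
    intro S hS T hT hST
    rw [range_add_one] at hS hT
    by_cases hNS : N ∈ S <;> by_cases hNT : N ∈ T
    · rw [← add_sum_erase _ _ hNS, ← add_sum_erase _ _ hNT, Nat.add_left_cancel_iff] at hST
      rw [← insert_erase hNS, ← insert_erase hNT,
        ih _ (subset_insert_iff.1 hS) _ (subset_insert_iff.1 hT) hST]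
    · have := sum_lt_of_subset_range hy ((subset_insert_iff_of_notMem hNT).1 hT)
      have := single_le_sum (fun k _ => (y k).zero_le) hNS
      omega
    · have := sum_lt_of_subset_range hy ((subset_insert_iff_of_notMem hNS).1 hS)
      have := single_le_sum (fun k _ => (y k).zero_le) hNT
      omega
    · exact ih S ((subset_insert_iff_of_notMem hNS).1 hS) T
        ((subset_insert_iff_of_notMem hNT).1 hT) hST

end Superincreasing

section Blocks

variable (b : ℕ → ℕ)

/-- Block `j` is longer than the sum of all earlier terms of `b`, which makes the block sums
superincreasing once `b` is positive. -/
def blockStart : ℕ → ℕ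
  | 0 => 0
  | j + 1 => blockStart j + ∑ k ∈ range (blockStart j), b k + 1

def block (j : ℕ) : Finset ℕ := Ico (blockStart b j) (blockStart b (j + 1))

def blockSum (j : ℕ) : ℕ := ∑ k ∈ block b j, b k

lemma blockStart_lt_succ (j : ℕ) : blockStart b j < blockStart b (j + 1) := by
  simp only [blockStart]
  omega

lemma block_nonempty (j : ℕ) : (block b j).Nonempty :=
  nonempty_Ico.2 (blockStart_lt_succ b j)

lemma pairwise_disjoint_block : Pairwise fun j j' => Disjoint (block b j) (block b j') := by
  intro j j' hjj'
  have hmono := (strictMono_nat_of_lt_succ (blockStart_lt_succ b)).monotone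
  rw [block, block, ← disjoint_coe, coe_Ico, coe_Ico]
  exact hmono.pairwise_disjoint_on_Ico_succ hjj'

lemma sum_range_blockSum (J : ℕ) :
    ∑ j ∈ range J, blockSum b j = ∑ k ∈ range (blockStart b J), b k := by
  induction J with
  | zero => simp [blockStart]
  | succ J ih =>
    rw [sum_range_succ, ih, blockSum, block, range_eq_Ico, range_eq_Ico,
      sum_Ico_consecutive _ (Nat.zero_le _) (blockStart_lt_succ b J).le]

lemma blockSum_superincreasing (hb : ∀ k, 0 < b k) (J : ℕ) :
    ∑ j ∈ range J, blockSum b j < blockSum b J := by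
  have hcard : #(block b J) ≤ blockSum b J := by
    simpa [blockSum] using card_nsmul_le_sum (block b J) b 1 fun k _ => hb k
  rw [block, Nat.card_Ico, blockStart] at hcard
  rw [sum_range_blockSum]
  omega

lemma sum_blockSum (J : Finset ℕ) :
    ∑ j ∈ J, blockSum b j = ∑ k ∈ J.biUnion (block b), b k :=
  (sum_biUnion fun _ _ _ _ h => pairwise_disjoint_block b h).symm

end Blocks

lemma eq_zero_of_sum_pow_mul_eq_zero {B : ℤ} (hB : 0 < B) {N : ℕ} {v : ℕ → ℤ}
    (hv : ∀ k, |v k| < B) (hsum : ∑ k ∈ range N, B ^ k * v k = 0) : ∀ k < N, v k = 0 := by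
  induction N generalizing v with
  | zero => simp
  | succ N ih =>
    have hsplit : ∑ k ∈ range (N + 1), B ^ k * v k =
        v 0 + B * ∑ k ∈ range N, B ^ k * v (k + 1) := by
      rw [sum_range_succ', mul_sum, add_comm, pow_zero, one_mul]
      exact congrArg _ (sum_congr rfl fun k _ => by ring)
    rw [hsplit] at hsum
    have hv0 : v 0 = 0 :=
      Int.eq_zero_of_abs_lt_dvd ⟨-∑ k ∈ range N, B ^ k * v (k + 1), by linarith⟩ (hv 0)
    rw [hv0, zero_add, mul_eq_zero, or_iff_right hB.ne'] at hsum
    have := ih (fun k => hv (k + 1)) hsum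
    rintro (_ | k) hk
    exacts [hv0, this k (by omega)]

lemma sum_sum_mul_eq_sum_mul_sum_filter {ι κ R : Type*} [Fintype ι] [DecidableEq κ]
    [CommSemiring R] (S : ι → Finset κ) {U : Finset κ} (hSU : ∀ i, S i ⊆ U) (w : κ → R)
    (a : ι → R) :
    ∑ i, (∑ k ∈ S i, w k) * a i = ∑ k ∈ U, w k * ∑ i with k ∈ S i, a i := by
  simp only [sum_mul, mul_sum]
  exact sum_comm' fun i k => by simpa using fun hk => hSU i hk

lemma Hindman.exists_finset_sum_eq_of_mem_FS {M : Type*} [AddCommMonoid M] {a : Stream' M}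
    {m : M} (h : m ∈ Hindman.FS a) :
    ∃ S : Finset ℕ, S.Nonempty ∧ ∑ k ∈ S, a.get k = m := by
  induction h with
  | head' a => exact ⟨{0}, singleton_nonempty 0, by simp [Stream'.head]⟩
  | tail' a m _ ih =>
    obtain ⟨S, hS, rfl⟩ := ih
    exact ⟨S.map (addRightEmbedding 1), hS.map, by simp [Stream'.get_tail]⟩
  | cons' a m _ ih =>
    obtain ⟨S, hS, rfl⟩ := ih
    refine ⟨insert 0 (S.map (addRightEmbedding 1)), insert_nonempty _ _, ?_⟩
    rw [sum_insert (by simp)]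
    simp [Stream'.get_tail, Stream'.head]

lemma Hindman.exists_FS_subset_of_coloring {M C : Type*} [AddSemigroup M] [Finite C]
    (a : Stream' M) (c : M → C) : ∃ b : Stream' M, Hindman.FS b ⊆ Hindman.FS a ∧
      ∃ q, ∀ z ∈ Hindman.FS b, c z = q := by
  obtain ⟨_, ⟨q, rfl⟩, b, hb⟩ := Hindman.FS_partition_regular a
    (Set.range fun q => c ⁻¹' {q} ∩ Hindman.FS a) (Set.finite_range _)
    fun z hz => Set.mem_sUnion.2 ⟨_, ⟨c z, rfl⟩, rfl, hz⟩
  exact ⟨b, fun z hz => (hb hz).2, q, fun z hz => (hb hz).1⟩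

lemma mem_FSk_two_iff {x : ℕ → ℕ} (hx : ∀ k, 0 < x k) {s : ℕ} :
    s ∈ FSk 2 x ↔ ∃ S : Finset ℕ, S.Nonempty ∧ ∑ k ∈ S, x k = s := by
  classical
  constructor
  · rintro ⟨⟨N, ε, hε, rfl⟩, hs0⟩
    set S := (univ.filter fun i : Fin N => ε i = 1).map Fin.valEmbedding
    have hS : ∑ k ∈ S, x k = ∑ i, ε i * x i := by
      rw [sum_map, sum_filter]
      exact sum_congr rfl fun i _ => by
        obtain h | h : ε i = 0 ∨ ε i = 1 := by have := hε i; omega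
        all_goals simp [h]
    exact ⟨S, nonempty_of_sum_ne_zero (hS ▸ hs0), hS⟩
  · rintro ⟨S, hS, rfl⟩
    refine ⟨⟨(S.sup id).succ, fun i => if (i : ℕ) ∈ S then 1 else 0,
      fun i => by dsimp only; split_ifs <;> norm_num, ?_⟩, (sum_pos (fun k _ => hx k) hS).ne'⟩
    rw [Fin.sum_univ_eq_sum_range (fun k => (if k ∈ S then 1 else 0) * x k)]
    simp only [ite_mul, one_mul, zero_mul, sum_ite_mem, inter_eq_right.2 S.subset_range_sup_succ]

lemma FS_subset_FSk_two {x : ℕ → ℕ} (hx : ∀ k, 0 < x k) :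
    Hindman.FS (x : Stream' ℕ) ⊆ FSk 2 x := fun _ hz =>
  (mem_FSk_two_iff hx).2 (Hindman.exists_finset_sum_eq_of_mem_FS hz)

lemma sum_blockSum_mem_FS (a : Stream' ℕ) {J : Finset ℕ} (hJ : J.Nonempty) :
    ∑ j ∈ J, blockSum a.get j ∈ Hindman.FS a := by
  rw [sum_blockSum]
  exact Hindman.FS.finsetSum a _ (hJ.biUnion fun j _ => block_nonempty _ j)

lemma abs_sum_le_sum_sum_abs {ι κ R : Type*} [Fintype ι] [Fintype κ]
    [AddCommGroup R] [LinearOrder R] [IsOrderedAddMonoid R] (A : Matrix κ ι R) (t : κ)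
    (F : Finset ι) : |∑ i ∈ F, A t i| ≤ ∑ t, ∑ i, |A t i| :=
  calc |∑ i ∈ F, A t i| ≤ ∑ i, |A t i| :=
        (abs_sum_le_sum_abs _ _).trans (sum_le_sum_of_subset_of_nonneg (subset_univ F)
          fun _ _ _ => abs_nonneg _)
    _ ≤ ∑ t, ∑ i, |A t i| :=
        single_le_sum (f := fun t => ∑ i, |A t i|)
          (fun _ _ => sum_nonneg fun _ _ => abs_nonneg _) (mem_univ t)

section Rado

variable {l n : ℕ} (A : Matrix (Fin l) (Fin n) ℤ)

def IsDistinctIPRegular : Prop :=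
  ∀ Y : Set ℕ, IsKIPSet 2 Y → ∀ (r : ℕ) (c : ℕ → Fin r),
    ∃ x : Fin n → ℕ, Function.Injective x ∧ (∀ i, x i ∈ Y) ∧
      (∀ i i', c (x i) = c (x i')) ∧ ∀ t : Fin l, ∑ i, (x i : ℤ) * A t i = 0

def HasSeparatingZeroSumCover : Prop :=
  ∃ m : ℕ, 0 < m ∧ ∃ I : Fin m → Finset (Fin n),
    (∀ i : Fin n, ∃ j, i ∈ I j) ∧
    (∀ j, ∀ t : Fin l, ∑ i ∈ I j, A t i = 0) ∧
    ∀ i i' : Fin n, i ≠ i' → ∃ j, (i ∈ I j ∧ i' ∉ I j) ∨ (i ∉ I j ∧ i' ∈ I j)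

theorem HasSeparatingZeroSumCover.isDistinctIPRegular (h : HasSeparatingZeroSumCover A) :
    IsDistinctIPRegular A := by
  classical
  obtain ⟨m, -, I, hcover, hzero, hsep⟩ := h
  rintro Y ⟨x, -, hxpos, hxY⟩ r c
  obtain ⟨b, hbx, q, hbq⟩ := Hindman.exists_FS_subset_of_coloring (x : Stream' ℕ) c
  have hb : ∀ k, 0 < b.get k := fun k =>
    Nat.pos_of_ne_zero (FS_subset_FSk_two hxpos (hbx (Hindman.FS.singleton b k))).2
  let J : Fin n → Finset (Fin m) := fun i => {j | i ∈ I j}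
  let z : Fin n → ℕ := fun i => ∑ j ∈ (J i).map Fin.valEmbedding, blockSum b.get j
  have hzFS : ∀ i, z i ∈ Hindman.FS b := fun i =>
    sum_blockSum_mem_FS b (by simpa [J, filter_nonempty_iff] using hcover i)
  refine ⟨z, fun i i' hii' => ?_, fun i => hxY (FS_subset_FSk_two hxpos (hbx (hzFS i))),
    fun i i' => (hbq _ (hzFS i)).trans (hbq _ (hzFS i')).symm, fun t => ?_⟩
  · by_contra hne
    obtain ⟨j, hj⟩ := hsep i i' hne
    have hJ : J i = J i' := map_injective Fin.valEmbedding
      (sum_injective_of_superincreasing (blockSum_superincreasing _ hb) hii')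
    have := congrArg (j ∈ ·) hJ
    simp only [J, mem_filter, mem_univ, true_and, eq_iff_iff] at this
    tauto
  · simp only [z, sum_map, Nat.cast_sum]
    rw [sum_sum_mul_eq_sum_mul_sum_filter J (fun _ => subset_univ _)]
    simp [J, hzero]

theorem IsDistinctIPRegular.hasSeparatingZeroSumCover (H : IsDistinctIPRegular A) :
    HasSeparatingZeroSumCover A := by
  classical
  set B : ℕ := 2 + ∑ t, ∑ i, (A t i).natAbs
  obtain ⟨x, hinj, hxY, -, hx⟩ := H (FSk 2 (B ^ ·))
    ⟨_, pow_right_strictMono₀ (by omega), fun k => by positivity, subset_rfl⟩ 1 fun _ => 0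
  choose S hSne hS using fun i => (mem_FSk_two_iff (fun k => by positivity)).1 (hxY i)
  set N := (univ.biUnion S).sup id + 1
  have hSN : ∀ i, S i ⊆ range N := fun i =>
    (subset_biUnion_of_mem S (mem_univ i)).trans (subset_range_sup_succ _)
  have habs_lt : ∀ t (F : Finset (Fin n)), |∑ i ∈ F, A t i| < B := fun t F => by
    have := abs_sum_le_sum_sum_abs A t F
    push_cast [B, Int.natCast_natAbs]
    omega
  have hdigit : ∀ t, ∀ k < N, ∑ i with k ∈ S i, A t i = 0 := fun t =>
    eq_zero_of_sum_pow_mul_eq_zero (B := B) (by omega) (fun k => habs_lt t _) <| by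
      rw [← sum_sum_mul_eq_sum_mul_sum_filter S hSN, ← hx t]
      simp [← hS]
  refine ⟨N, Nat.succ_pos _, fun k => {i | ↑k ∈ S i}, fun i => ?_, fun k t => hdigit t k k.2,
    fun i i' hii' => ?_⟩
  · obtain ⟨k, hk⟩ := hSne i
    exact ⟨⟨k, mem_range.1 (hSN i hk)⟩, by simpa using hk⟩
  · obtain ⟨k, hk⟩ : ∃ k, ¬(k ∈ S i ↔ k ∈ S i') := by
      by_contra! h
      exact hii' (hinj (by rw [← hS, ← hS, ext h]))
    have hkN : k < N := by
      rcases em (k ∈ S i) with h | h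
      exacts [mem_range.1 (hSN i h), mem_range.1 (hSN i' (by tauto))]
    refine ⟨⟨k, hkN⟩, ?_⟩
    simp only [mem_filter, mem_univ, true_and]
    tauto

end Rado

/-- Rado's theorem on IP-sets, version with pairwise distinct solutions: the system
`A x = 0` has a monochromatic solution with pairwise distinct entries for every finite
coloring of any IP-set iff there are sets `I₁,…,I_m` covering `{1,…,n}` with
`∑_{i ∈ I_j} aᵢ = 0` for every `j`, which moreover separate points of `{1,…,n}`. -/
theorem stmt7 (l n : ℕ) (A : Matrix (Fin l) (Fin n) ℤ) :
    (∀ Y : Set ℕ, IsKIPSet 2 Y → ∀ (r : ℕ) (c : ℕ → Fin r),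
      ∃ x : Fin n → ℕ, Function.Injective x ∧ (∀ i, x i ∈ Y) ∧
        (∀ i i', c (x i) = c (x i')) ∧
        ∀ t : Fin l, ∑ i, (x i : ℤ) * A t i = 0) ↔
    (∃ m : ℕ, 0 < m ∧ ∃ I : Fin m → Finset (Fin n),
      (∀ i : Fin n, ∃ j, i ∈ I j) ∧
      (∀ j, ∀ t : Fin l, ∑ i ∈ I j, A t i = 0) ∧
      ∀ i i' : Fin n, i ≠ i' →
        ∃ j, (i ∈ I j ∧ i' ∉ I j) ∨ (i ∉ I j ∧ i' ∈ I j)) :=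
  ⟨IsDistinctIPRegular.hasSeparatingZeroSumCover A,
    HasSeparatingZeroSumCover.isDistinctIPRegular A⟩
end

section
/- For every integer k ≥ 3, the family of k-IP-sets is not partition regular on ℕ: there exists a finite coloring of ℕ such that no color class contains a k-IP-set, i.e., no color class contains FS^k((x_i)) for any strictly increasing sequence (x_i) of positive integers. -/
/-- For `k ≥ 3` the family of `k`-IP-sets is not partition regular: there is a finite
coloring of `ℕ` such that no color class contains `FSk k x` for any strictly increasing
sequence `x` of positive integers. -/
theorem stmt9 (k : ℕ) (hk : 3 ≤ k) :
    ∃ (r : ℕ) (c : ℕ → Fin r),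
      ∀ x : ℕ → ℕ, StrictMono x → (∀ i, 0 < x i) →
        ¬ ∃ c0 : Fin r, ∀ s ∈ FSk k x, c s = c0 := by
  refine ⟨2, fun n => ⟨padicValNat 2 n % 2, Nat.mod_lt _ two_pos⟩, ?_⟩
  rintro x hmono hpos ⟨c0, hc⟩
  have hx0 : x 0 ≠ 0 := (hpos 0).ne'
  have h1 : x 0 ∈ FSk k x := by
    refine ⟨⟨1, fun _ => 1, fun i => by show 1 < k; omega, ?_⟩, hx0⟩
    simp
  have h2 : 2 * x 0 ∈ FSk k x := by
    refine ⟨⟨1, fun _ => 2, fun i => by show 2 < k; omega, ?_⟩, by simpa using hx0⟩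
    simp
  have e1 := hc _ h1
  have e2 := hc _ h2
  rw [← e1] at e2
  have hv : padicValNat 2 (2 * x 0) = padicValNat 2 (x 0) + 1 := by
    rw [padicValNat.mul (by norm_num) hx0, padicValNat.self one_lt_two]
    omega
  have := Fin.mk.injEq (padicValNat 2 (2 * x 0) % 2) _ (padicValNat 2 (x 0) % 2) _ ▸ e2
  simp only [Fin.mk.injEq] at e2
  omega
end

section
/- Let k ≥ 2 and let A ⊆ ℕ be a k-IP-set. For every finite coloring of A and every t ∈ ℕ, there exist m ∈ ℕ ∪ {0} and positive integers y_1, ..., y_t such that the set m + FS^k((y_i)_{i=1}^t) = { m + Σ_{i=1}^t ε_i y_i : ε_i ∈ {0,...,k-1}, not all ε_i zero } is a monochromatic subset of A. -/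
/-- `FSkFin k t y` is the finite version: all sums `∑_{j<t} εⱼ yⱼ` with
`εⱼ ∈ {0,…,k-1}`, excluding `0`. -/
def FSkFin (k t : ℕ) (y : Fin t → ℕ) : Set ℕ :=
  {s | ∃ ε : Fin t → ℕ, (∀ j, ε j < k) ∧ s = ∑ j, ε j * y j} \ {0}

/-- For `k ≥ 2`, a `k`-IP-set `A`, a finite coloring of `A` and `t ≥ 1`, there exist
`m ∈ ℕ ∪ {0}` and positive integers `y₁,…,y_t` such that `m + FSkFin k t y` is a
monochromatic subset of `A`. -/
theorem stmt10 (k : ℕ) (hk : 2 ≤ k) (A : Set ℕ) (hA : IsKIPSet k A)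
    (r : ℕ) (c : ℕ → Fin r) (t : ℕ) (ht : 0 < t) :
    ∃ (m : ℕ) (y : Fin t → ℕ), (∀ j, 0 < y j) ∧
      (∀ s ∈ FSkFin k t y, m + s ∈ A) ∧
      (∀ s ∈ FSkFin k t y, ∀ s' ∈ FSkFin k t y, c (m + s) = c (m + s')) := by
  classical
  obtain ⟨x, -, hxpos, hsub⟩ := hA
  obtain ⟨n, hn⟩ := Combinatorics.Subspace.exists_mono_in_high_dimension_fin (Fin k) (Fin r) (Fin t)
  set F : (Fin n → Fin k) → ℕ := fun p => ∑ i, (p i : ℕ) * x i with hF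
  obtain ⟨l, col, hcol⟩ := hn (fun p => c (F p))
  set y : Fin t → ℕ :=
    fun j => ∑ i ∈ Finset.univ.filter (fun i => l.idxFun i = Sum.inr j), x i with hy
  set z0 : Fin k := (⟨0, by omega⟩ : Fin k) with hz0
  set m : ℕ := F (l (fun _ => z0)) with hm
  -- key identity
  have hterm : ∀ (a : Fin t → Fin k) (i : Fin n),
      ((l a i : ℕ)) = Sum.elim (fun b : Fin k => (b : ℕ)) (fun e => ((a e : ℕ))) (l.idxFun i) := by
    intro a i
    rw [Combinatorics.Subspace.apply_def]
    cases l.idxFun i <;> simp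
  have key : ∀ a : Fin t → Fin k, F (l a) = m + ∑ j, (a j : ℕ) * y j := by
    intro a
    have h1 : ∀ (a : Fin t → Fin k), F (l a)
        = ∑ i, (Sum.elim (fun b : Fin k => (b : ℕ)) (fun e => ((a e : ℕ))) (l.idxFun i)) * x i := by
      intro a
      simp only [hF]
      exact Finset.sum_congr rfl fun i _ => by rw [hterm]
    rw [h1, hm, h1]
    have h2 : ∀ i : Fin n,
        (Sum.elim (fun b : Fin k => (b : ℕ)) (fun e => ((a e : ℕ))) (l.idxFun i)) * x i
        = (Sum.elim (fun b : Fin k => (b : ℕ)) (fun _ => ((z0 : ℕ))) (l.idxFun i)) * x i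
          + ∑ j, (if l.idxFun i = Sum.inr j then (a j : ℕ) * x i else 0) := by
      intro i
      cases h : l.idxFun i with
      | inl b => simp [h]
      | inr e =>
        simp only [h, Sum.elim_inr, Sum.inr.injEq]
        rw [Finset.sum_ite_eq]
        simp [hz0]
    rw [Finset.sum_congr rfl fun i _ => h2 i, Finset.sum_add_distrib]
    congr 1
    rw [Finset.sum_comm]
    refine Finset.sum_congr rfl fun j _ => ?_
    rw [hy, Finset.mul_sum, ← Finset.sum_filter]
  -- membership in FSk
  have hmem : ∀ a : Fin t → Fin k, F (l a) ≠ 0 → F (l a) ∈ A := by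
    intro a hne
    apply hsub
    exact ⟨⟨n, fun i => (l a i : ℕ), fun i => (l a i).isLt, rfl⟩, hne⟩
  refine ⟨m, y, ?_, ?_, ?_⟩
  · intro j
    obtain ⟨i, hi⟩ := l.proper j
    have hle : x (i : ℕ) ≤ y j := by
      simp only [hy]
      exact Finset.single_le_sum (f := fun i : Fin n => x (i : ℕ))
        (fun _ _ => Nat.zero_le _) (Finset.mem_filter.mpr ⟨Finset.mem_univ i, hi⟩)
    exact lt_of_lt_of_le (hxpos i) hle
  · rintro s ⟨⟨ε, hε, rfl⟩, hs0⟩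
    set a : Fin t → Fin k := fun j => ⟨ε j, hε j⟩ with ha
    have hsa : ∑ j, ε j * y j = ∑ j, (a j : ℕ) * y j := rfl
    rw [hsa, ← key]
    apply hmem
    rw [key, ← hsa]
    simp only [Set.mem_singleton_iff] at hs0
    omega
  · rintro s ⟨⟨ε, hε, rfl⟩, -⟩ s' ⟨⟨ε', hε', rfl⟩, -⟩
    set a : Fin t → Fin k := fun j => ⟨ε j, hε j⟩ with ha
    set a' : Fin t → Fin k := fun j => ⟨ε' j, hε' j⟩ with ha'
    have e1 : m + ∑ j, ε j * y j = F (l a) := (key a).symm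
    have e2 : m + ∑ j, ε' j * y j = F (l a') := (key a').symm
    rw [e1, e2]
    exact (hcol a).trans (hcol a').symm
end

section
/- Let a_1 x_1 + ⋯ + a_n x_n = 0 be a shift-invariant equation with non-zero integer coefficients, and let k ≥ 2. The following are equivalent: (1) for every k-IP-set A and every finite coloring of A, there exist pairwise distinct x_1, ..., x_n ∈ A, all of the same color, with a_1 x_1 + ⋯ + a_n x_n = 0; (2) there exists t ∈ ℕ such that for all positive integers y_1, ..., y_t, if FS^k((y_j)_{j=1}^t) has distinct sums, then it contains pairwise distinct x_1, ..., x_n with a_1 x_1 + ⋯ + a_n x_n = 0. -/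
/-- `FSkFin k t y` has distinct sums if the map `(ε₁,…,ε_t) ↦ ∑ εⱼ yⱼ` is injective on
`{0,…,k-1}^t`. -/
def HasDistinctSums (k t : ℕ) (y : Fin t → ℕ) : Prop :=
  ∀ ε δ : Fin t → ℕ, (∀ j, ε j < k) → (∀ j, δ j < k) →
    (∑ j, ε j * y j) = (∑ j, δ j * y j) → ε = δ

/-!
Both conditions are equivalent to the existence of a solution matrix: a matrix of digits `< k`
with distinct nonzero rows, each of whose columns solves the equation. Such a matrix `M` yields
the solution `M y` inside `FS^k(y)` for every `y` with distinct sums, and, through the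
Hales–Jewett theorem over the alphabet of digit rows, a monochromatic solution in every
finitely coloured `k`-IP-set; there one first passes to a super-increasing subsequence, so that
sums determine their digits, and shift-invariance absorbs both the leading term and the constant
coordinates of the line. Conversely, a solution inside `FS^k(B^0, B^1, …)` for a large base `B`
yields a solution matrix by reading off digits: the equation holds digit by digit because the
column sums are too small to carry.
-/

open Finset Function

def SuperIncreasing (K : ℕ) (g : ℕ → ℕ) : Prop :=
  ∀ l, K * ∑ p ∈ range l, g p < g l

namespace SuperIncreasing

variable {K : ℕ} {g : ℕ → ℕ}

theorem of_mul_le (h0 : 0 < g 0) (hg : ∀ l, (K + 1) * g l ≤ g (l + 1)) :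
    SuperIncreasing K g := by
  intro l
  induction l with
  | zero => simpa using h0
  | succ l ih =>
    rw [sum_range_succ, mul_add]
    linarith [hg l, add_one_mul K (g l)]

theorem pow {B : ℕ} (hB : K + 1 ≤ B) : SuperIncreasing K (B ^ ·) :=
  of_mul_le (by simp) fun l => by
    rw [pow_succ, mul_comm]
    exact Nat.mul_le_mul_left _ hB

theorem abs_sum_lt (hg : SuperIncreasing K g) {ι : Type*} {e : ι → ℕ} (he : Injective e)
    {c : ι → ℤ} (hc : ∀ i, |c i| ≤ K) {s : Finset ι} {q : ℕ} (hs : ∀ i ∈ s, e i < q) :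
    |∑ i ∈ s, c i * g (e i)| < g q := by
  have hsub : s.image e ⊆ range q := fun p hp => by
    obtain ⟨i, hi, rfl⟩ := mem_image.1 hp
    exact mem_range.2 (hs i hi)
  calc |∑ i ∈ s, c i * g (e i)|
      ≤ ∑ i ∈ s, (K : ℤ) * g (e i) := by
        refine (abs_sum_le_sum_abs _ _).trans (sum_le_sum fun i _ => ?_)
        rw [abs_mul, Nat.abs_cast]
        exact mul_le_mul_of_nonneg_right (hc i) (by positivity)
    _ = ((K * ∑ p ∈ s.image e, g p : ℕ) : ℤ) := by
        rw [sum_image he.injOn, mul_sum]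
        push_cast
        rfl
    _ < g q := by
        exact_mod_cast (Nat.mul_le_mul_left K (sum_le_sum_of_subset hsub)).trans_lt (hg q)

/-- The largest index carrying a nonzero coefficient outweighs all the others. -/
theorem eq_zero_of_sum_eq_zero (hg : SuperIncreasing K g) {ι : Type*} [Fintype ι]
    {e : ι → ℕ} (he : Injective e) {c : ι → ℤ} (hc : ∀ i, |c i| ≤ K)
    (h : ∑ i, c i * g (e i) = 0) : c = 0 := by
  classical
  suffices ∀ s : Finset ι, ∑ i ∈ s, c i * g (e i) = 0 → ∀ i ∈ s, c i = 0 from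
    funext fun i => this univ h i (mem_univ i)
  intro s
  induction s using induction_on_max_value e with
  | empty => simp
  | insert a s has hmax ih =>
    intro hsum
    rw [sum_insert has] at hsum
    have hrest := hg.abs_sum_lt he hc fun i hi =>
      (hmax i hi).lt_of_ne fun hia => has (he hia ▸ hi)
    have hca : c a = 0 := by
      by_contra hne
      have : g (e a) ≤ |c a * g (e a)| := by
        rw [abs_mul, Nat.abs_cast]
        exact le_mul_of_one_le_left (by positivity) (Int.one_le_abs hne)
      rw [eq_neg_of_add_eq_zero_left hsum, abs_neg] at this
      exact this.not_gt hrest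
    rw [hca, zero_mul, zero_add] at hsum
    intro i hi
    rcases mem_insert.1 hi with rfl | hi
    exacts [hca, ih hsum i hi]

theorem sum_injective (hg : SuperIncreasing K g) {ι : Type*} [Fintype ι]
    {e : ι → ℕ} (he : Injective e) {ε δ : ι → ℕ} (hε : ∀ i, ε i ≤ K) (hδ : ∀ i, δ i ≤ K)
    (h : ∑ i, ε i * g (e i) = ∑ i, δ i * g (e i)) : ε = δ := by
  have := hg.eq_zero_of_sum_eq_zero he (c := fun i => (ε i : ℤ) - δ i)
    (fun i => abs_sub_le_iff.2 ⟨by linarith [hε i], by linarith [hδ i]⟩)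
    (by simp only [sub_mul, sum_sub_distrib, sub_eq_zero]; exact_mod_cast h)
  funext i
  simpa [sub_eq_zero] using congrFun this i

end SuperIncreasing

theorem StrictMono.exists_superIncreasing_comp {x : ℕ → ℕ} (hx : StrictMono x) (hpos : 0 < x 0)
    (K : ℕ) : ∃ ν : ℕ → ℕ, StrictMono ν ∧ SuperIncreasing K (x ∘ ν) := by
  let ν : ℕ → ℕ := fun l => Nat.rec 0 (fun _ v => (K + 1) * x v + 1) l
  have hν : ∀ l, ν (l + 1) = (K + 1) * x (ν l) + 1 := fun _ => rfl
  have hle : ∀ l, ν l ≤ x (ν l) := fun l => hx.id_le _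
  refine ⟨ν, strictMono_nat_of_lt_succ fun l => ?_, .of_mul_le hpos fun l => ?_⟩
  · rw [hν]
    nlinarith [hle l]
  · have := hle (l + 1)
    rw [hν] at this
    simp only [comp_apply, hν]
    omega

theorem sum_extend_zero_mul {ι κ R : Type*} [Fintype ι] [Fintype κ] [NonUnitalNonAssocSemiring R]
    {e : ι → κ} (he : Injective e) (ε : ι → R) (f : κ → R) :
    ∑ j, extend e ε 0 j * f j = ∑ i, ε i * f (e i) := by
  classical
  rw [← sum_subset (subset_univ (univ.image e)) fun j _ hj => ?_, sum_image he.injOn]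
  · simp only [he.extend_apply]
  · rw [extend_apply' _ _ _ fun ⟨i, hi⟩ => hj (hi ▸ mem_image_of_mem e (mem_univ i)),
      Pi.zero_apply, zero_mul]

theorem extend_zero_lt {ι κ : Type*} {e : ι → κ} {k : ℕ} (hk : 0 < k) {ε : ι → ℕ}
    (hε : ∀ i, ε i < k) (j : κ) : extend e ε 0 j < k := by
  classical
  rw [extend_def]
  split_ifs
  exacts [hε _, hk]

variable {k : ℕ}

theorem sum_mem_FSk (hk : 0 < k) (x : ℕ → ℕ) {ι : Type*} [Fintype ι] {e : ι → ℕ}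
    (he : Injective e) {ε : ι → ℕ} (hε : ∀ i, ε i < k) (h0 : ∑ i, ε i * x (e i) ≠ 0) :
    ∑ i, ε i * x (e i) ∈ FSk k x := by
  obtain ⟨N, hN⟩ : ∃ N, ∀ i, e i < N :=
    ⟨univ.sup e + 1, fun i => Nat.lt_succ_of_le (le_sup (mem_univ i))⟩
  let e' : ι → Fin N := fun i => ⟨e i, hN i⟩
  have he' : Injective e' := fun i j hij => he (congrArg Fin.val hij)
  exact ⟨⟨N, extend e' ε 0, extend_zero_lt hk hε,
    (sum_extend_zero_mul he' ε fun j => x j).symm⟩, h0⟩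

theorem FSkFin_mono (hk : 0 < k) (x : ℕ → ℕ) {N L : ℕ} (h : N ≤ L) :
    FSkFin k N (fun j => x j) ⊆ FSkFin k L (fun j => x j) := by
  rintro s ⟨⟨ε, hε, rfl⟩, h0⟩
  exact ⟨⟨extend (Fin.castLE h) ε 0, extend_zero_lt hk hε,
    (sum_extend_zero_mul (Fin.castLE_injective h) ε fun j => x j).symm⟩, h0⟩

theorem exists_forall_mem_FSkFin (hk : 0 < k) (x : ℕ → ℕ) {ι : Type*} [Fintype ι] {s : ι → ℕ}
    (hs : ∀ i, s i ∈ FSk k x) : ∃ L, ∀ i, s i ∈ FSkFin k L (fun j => x j) := by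
  have : ∀ i, ∃ N, s i ∈ FSkFin k N (fun j => x j) := fun i =>
    let ⟨⟨N, ε, hε, h⟩, h0⟩ := hs i
    ⟨N, ⟨ε, hε, h⟩, h0⟩
  choose N hN using this
  exact ⟨univ.sup N, fun i => FSkFin_mono hk x (le_sup (mem_univ i)) (hN i)⟩

theorem hasDistinctSums_pow {B : ℕ} (hB : 0 < B) (hkB : k ≤ B) (t : ℕ) :
    HasDistinctSums k t (fun j => B ^ (j : ℕ)) := fun _ _ hε hδ h =>
  (SuperIncreasing.pow (K := k - 1) (by omega)).sum_injective Fin.val_injective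
    (fun j => Nat.le_sub_one_of_lt (hε j)) (fun j => Nat.le_sub_one_of_lt (hδ j)) h

theorem sum_mul_cast_sum_mul {ι κ : Type*} [Fintype ι] [Fintype κ] (a : ι → ℤ) (M : ι → κ → ℕ)
    (y : κ → ℕ) :
    ∑ i, a i * ((∑ j, M i j * y j : ℕ) : ℤ) = ∑ j, (∑ i, a i * (M i j : ℤ)) * y j := by
  push_cast
  simp_rw [mul_sum, sum_mul, mul_assoc]
  exact sum_comm

theorem SuperIncreasing.col_sum_eq_zero {K : ℕ} {g : ℕ → ℕ} (hg : SuperIncreasing K g)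
    {ι κ : Type*} [Fintype ι] [Fintype κ] {e : κ → ℕ} (he : Injective e) {a : ι → ℤ}
    {D : ℕ} (hK : D * ∑ i, (a i).natAbs ≤ K) {E : ι → κ → ℕ} (hE : ∀ i j, E i j ≤ D)
    (h : ∑ i, a i * ((∑ j, E i j * g (e j) : ℕ) : ℤ) = 0) (j : κ) :
    ∑ i, a i * (E i j : ℤ) = 0 := by
  refine congrFun (hg.eq_zero_of_sum_eq_zero he (c := fun j => ∑ i, a i * (E i j : ℤ))
    (fun j => ?_) ?_) j
  · calc |∑ i, a i * (E i j : ℤ)|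
        ≤ ∑ i, |a i| * D := by
          refine (abs_sum_le_sum_abs _ _).trans (sum_le_sum fun i _ => ?_)
          rw [abs_mul, Nat.abs_cast]
          exact mul_le_mul_of_nonneg_left (by exact_mod_cast hE i j) (abs_nonneg _)
      _ ≤ K := by
          rw [← sum_mul, mul_comm]
          simp only [Int.abs_eq_natAbs]
          exact_mod_cast hK
  · rwa [← sum_mul_cast_sum_mul]

variable {n : ℕ}

/-- A coordinate of a combinatorial line either moves with the letter or is constant. -/
theorem Combinatorics.Line.sum_mul_apply_eq_zero {α ι : Type*} {a : Fin n → ℤ}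
    (hsi : ∑ i, a i = 0) (l : Line α ι) {w : Fin n → α} {f : α → ℤ}
    (hf : ∑ i, a i * f (w i) = 0) (j : ι) : ∑ i, a i * f (l (w i) j) = 0 := by
  cases hj : l.idxFun j with
  | none => simpa only [l.apply_none _ _ hj] using hf
  | some b => simp only [Line.apply_some hj, ← sum_mul, hsi, zero_mul]

structure IsSolutionMatrix (k : ℕ) (a : Fin n → ℤ) {m : ℕ} (M : Fin n → Fin m → ℕ) : Prop where
  lt : ∀ i j, M i j < k
  injective : Injective M
  ne_zero : ∀ i, M i ≠ 0
  col_sum : ∀ j, ∑ i, a i * (M i j : ℤ) = 0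

theorem isSolutionMatrix_of_mem_FSkFin {a : Fin n → ℤ} {t B : ℕ}
    (hB : (k - 1) * ∑ i, (a i).natAbs < B) {x : Fin n → ℕ} (hx : Injective x)
    (hmem : ∀ i, x i ∈ FSkFin k t (fun j => B ^ (j : ℕ))) (heq : ∑ i, a i * (x i : ℤ) = 0) :
    ∃ M : Fin n → Fin t → ℕ, IsSolutionMatrix k a M := by
  choose M hM hxM using fun i => (hmem i).1
  refine ⟨M, hM, fun i i' h => hx (by rw [hxM i, hxM i', h]), fun i h => (hmem i).2 ?_, ?_⟩
  · simp [hxM i, h]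
  · simp only [hxM] at heq
    exact (SuperIncreasing.pow hB).col_sum_eq_zero Fin.val_injective le_rfl
      (fun i j => Nat.le_sub_one_of_lt (hM i j)) heq

namespace IsSolutionMatrix

variable {a : Fin n → ℤ} {m : ℕ} {M : Fin n → Fin m → ℕ}

theorem pos (hM : IsSolutionMatrix k a M) (hn : 0 < n) : 0 < m := by
  refine Nat.pos_of_ne_zero fun hm => hM.ne_zero ⟨0, hn⟩ ?_
  subst hm
  exact funext fun j => j.elim0

theorem exists_solution_mem_FSkFin (hM : IsSolutionMatrix k a M) {y : Fin m → ℕ}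
    (hy : ∀ j, 0 < y j) (hds : HasDistinctSums k m y) :
    ∃ x : Fin n → ℕ, Injective x ∧ (∀ i, x i ∈ FSkFin k m y) ∧ ∑ i, a i * (x i : ℤ) = 0 := by
  refine ⟨fun i => ∑ j, M i j * y j, fun i i' h => hM.injective (hds _ _ (hM.lt i) (hM.lt i') h),
    fun i => ⟨⟨M i, hM.lt i, rfl⟩, ?_⟩, ?_⟩
  · obtain ⟨j, hj⟩ := Function.ne_iff.1 (hM.ne_zero i)
    exact (sum_pos' (fun _ _ => Nat.zero_le _) ⟨j, mem_univ j, Nat.mul_pos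
      (Nat.pos_of_ne_zero hj) (hy j)⟩).ne'
  · rw [sum_mul_cast_sum_mul]
    simp [hM.col_sum]

/-- Hales–Jewett over the alphabet of digit rows `Fin m → Fin k`: a point `w` of the cube is
read as the number `x_{ν₀} + ∑ w j u · x_{ν (j, u)}`, the leading `1` making it nonzero and
harmless for a shift-invariant equation. -/
theorem exists_mono_solution (hM : IsSolutionMatrix k a M) (hk : 2 ≤ k) (hsi : ∑ i, a i = 0)
    {x : ℕ → ℕ} (hx : StrictMono x) (hpos : ∀ i, 0 < x i) {r : ℕ} (c : ℕ → Fin r) :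
    ∃ z : Fin n → ℕ, Injective z ∧ (∀ i, z i ∈ FSk k x) ∧ (∀ i i', c (z i) = c (z i')) ∧
      ∑ i, a i * (z i : ℤ) = 0 := by
  obtain ⟨ν, hν, hsup⟩ := hx.exists_superIncreasing_comp (hpos 0) (k - 1)
  obtain ⟨ι, _, hHJ⟩ := Combinatorics.Line.exists_mono_in_high_dimension (Fin m → Fin k) (Fin r)
  let e : Option (ι × Fin m) → ℕ := fun o => Fintype.equivFin _ o
  have he : Injective e := Fin.val_injective.comp (Fintype.equivFin _).injective
  let digit : (ι → Fin m → Fin k) → Option (ι × Fin m) → ℕ := fun w o =>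
    o.elim 1 fun p => w p.1 p.2
  have hdigit : ∀ w o, digit w o < k := by
    rintro w (_ | p)
    exacts [hk, (w p.1 p.2).isLt]
  let value : (ι → Fin m → Fin k) → ℕ := fun w => ∑ o, digit w o * (x ∘ ν) (e o)
  have hvalue : ∀ w, value w ≠ 0 := fun w h => (hpos _).ne' <| by
    simpa [digit] using sum_eq_zero_iff.1 h none (mem_univ _)
  obtain ⟨l, c₀, hl⟩ := hHJ (c ∘ value)
  let row : Fin n → Fin m → Fin k := fun i j => ⟨M i j, hM.lt i j⟩
  refine ⟨fun i => value (l (row i)), fun i i' h => ?_,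
    fun i => sum_mem_FSk (by omega) x (hν.injective.comp he) (hdigit _) (hvalue _),
    fun i i' => (hl _).trans (hl _).symm, ?_⟩
  · have hdig := hsup.sum_injective he (fun o => Nat.le_sub_one_of_lt (hdigit _ o))
      (fun o => Nat.le_sub_one_of_lt (hdigit _ o)) h
    obtain ⟨j₀, hj₀⟩ := l.proper
    refine hM.injective (funext fun u => ?_)
    simpa [digit, row, hj₀] using congrFun hdig (some (j₀, u))
  · rw [sum_mul_cast_sum_mul]
    refine sum_eq_zero fun o _ => ?_
    rcases o with _ | ⟨j, u⟩
    · simp [digit, hsi]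
    · have := l.sum_mul_apply_eq_zero hsi (w := row) (f := fun v => ((v u : ℕ) : ℤ))
        (hM.col_sum u) j
      exact mul_eq_zero_of_left this _

end IsSolutionMatrix

theorem stmt12_general (n : ℕ) (hn : 0 < n) (a : Fin n → ℤ)
    (hsi : ∑ i, a i = 0) (k : ℕ) (hk : 2 ≤ k) :
    (∀ A : Set ℕ, IsKIPSet k A → ∀ (r : ℕ) (c : ℕ → Fin r),
      ∃ x : Fin n → ℕ, Function.Injective x ∧ (∀ i, x i ∈ A) ∧
        (∀ i i', c (x i) = c (x i')) ∧ ∑ i, a i * (x i : ℤ) = 0) ↔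
    (∃ t : ℕ, 0 < t ∧ ∀ y : Fin t → ℕ, (∀ j, 0 < y j) →
      HasDistinctSums k t y →
        ∃ x : Fin n → ℕ, Function.Injective x ∧ (∀ i, x i ∈ FSkFin k t y) ∧
          ∑ i, a i * (x i : ℤ) = 0) := by
  set B := (k - 1) * ∑ i, (a i).natAbs + k
  have hB : (k - 1) * ∑ i, (a i).natAbs < B := by omega
  constructor
  · intro H
    obtain ⟨x, hx, hmem, -, heq⟩ := H (FSk k (B ^ ·))
      ⟨_, pow_right_strictMono₀ (by omega), fun _ => by positivity, subset_rfl⟩ 1 0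
    obtain ⟨t, ht⟩ := exists_forall_mem_FSkFin (by omega) _ hmem
    obtain ⟨M, hM⟩ := isSolutionMatrix_of_mem_FSkFin hB hx ht heq
    exact ⟨t, hM.pos hn, fun y hy hds => hM.exists_solution_mem_FSkFin hy hds⟩
  · rintro ⟨t, -, H⟩ A ⟨x, hx, hpos, hA⟩ r c
    obtain ⟨z, hz, hmem, heq⟩ := H (fun j => B ^ (j : ℕ)) (fun _ => by positivity)
      (hasDistinctSums_pow (by omega) (by omega) t)
    obtain ⟨M, hM⟩ := isSolutionMatrix_of_mem_FSkFin hB hz hmem heq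
    obtain ⟨w, hw, hwmem, hwc, hweq⟩ := hM.exists_mono_solution hk hsi hx hpos c
    exact ⟨w, hw, fun i => hA (hwmem i), hwc, hweq⟩

/-- For a shift-invariant equation `∑ aᵢ xᵢ = 0` with nonzero integer coefficients and
`k ≥ 2`: every finite coloring of every `k`-IP-set admits a monochromatic pairwise
distinct solution iff there is `t` such that every `FSkFin k t y` with distinct sums
contains a pairwise distinct solution. -/
theorem stmt12 (n : ℕ) (hn : 0 < n) (a : Fin n → ℤ) (ha : ∀ i, a i ≠ 0)
    (hsi : ∑ i, a i = 0) (k : ℕ) (hk : 2 ≤ k) :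
    (∀ A : Set ℕ, IsKIPSet k A → ∀ (r : ℕ) (c : ℕ → Fin r),
      ∃ x : Fin n → ℕ, Function.Injective x ∧ (∀ i, x i ∈ A) ∧
        (∀ i i', c (x i) = c (x i')) ∧ ∑ i, a i * (x i : ℤ) = 0) ↔
    (∃ t : ℕ, 0 < t ∧ ∀ y : Fin t → ℕ, (∀ j, 0 < y j) →
      HasDistinctSums k t y →
        ∃ x : Fin n → ℕ, Function.Injective x ∧ (∀ i, x i ∈ FSkFin k t y) ∧
          ∑ i, a i * (x i : ℤ) = 0) :=
  stmt12_general n hn a hsi k hk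
end

section
/- Let a, b be positive integers with gcd(a,b) = 1 and let k ≥ 2 be an integer. The following are equivalent: (1) every k-IP-set contains positive integers x, y, z, not all equal (equivalently, pairwise distinct), with a·x + b·y = (a+b)·z; (2) k > a + b. -/
/-!
If `k > a + b`, then for any generators `u = x₀`, `v = x₁` the triple
`((a + b) u + b v, b v, a u + b v)` is a non-trivial solution.
If `k ≤ a + b`, take `xᵢ = Nⁱ` with `N = (a + b) k`: no carries occur when forming `a x + b y`
or `(a + b) z`, so the equation holds digit by digit, and `a e + b f = (a + b) g` with digits
`e, f < k ≤ a + b` forces `e = f = g` by coprimality.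
-/

open Finset

theorem Nat.sum_range_succ_mul_pow (N n : ℕ) (c : ℕ → ℕ) :
    ∑ i ∈ range (n + 1), c i * N ^ i = c 0 + N * ∑ i ∈ range n, c (i + 1) * N ^ i := by
  rw [sum_range_succ', mul_sum, add_comm]
  simp only [pow_succ, pow_zero, mul_one]
  congr 1
  exact sum_congr rfl fun i _ => by ring

theorem Nat.eq_of_sum_range_mul_pow_eq {N : ℕ} {c d : ℕ → ℕ} (hc : ∀ i, c i < N)
    (hd : ∀ i, d i < N) {n : ℕ}
    (h : ∑ i ∈ range n, c i * N ^ i = ∑ i ∈ range n, d i * N ^ i) {i : ℕ} (hi : i < n) :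
    c i = d i := by
  induction n generalizing c d i with
  | zero => omega
  | succ n ih =>
    rw [Nat.sum_range_succ_mul_pow, Nat.sum_range_succ_mul_pow] at h
    have h0 : c 0 = d 0 := by
      simpa [Nat.add_mul_mod_self_left, Nat.mod_eq_of_lt (hc 0), Nat.mod_eq_of_lt (hd 0)]
        using congrArg (· % N) h
    rcases i with _ | i
    · exact h0
    · rw [h0, add_right_inj, Nat.mul_left_cancel_iff (Nat.zero_lt_of_lt (hc 0))] at h
      exact ih (fun i => hc (i + 1)) (fun i => hd (i + 1)) h (by omega)

theorem exists_coeffs_of_mem_FSk {k : ℕ} {x : ℕ → ℕ} {s : ℕ} (hk : 0 < k) (hs : s ∈ FSk k x) :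
    ∃ c : ℕ → ℕ, (∀ i, c i < k) ∧ ∃ n, ∀ M, n ≤ M → s = ∑ i ∈ range M, c i * x i := by
  obtain ⟨⟨n, ε, hε, rfl⟩, -⟩ := hs
  refine ⟨fun i => if h : i < n then ε ⟨i, h⟩ else 0, fun i => ?_, n, fun M hM => ?_⟩
  · dsimp only
    split
    · exact hε _
    · exact hk
  · rw [← sum_subset (range_subset_range.2 hM), ← Fin.sum_univ_eq_sum_range]
    · simp
    · intro i _ hi
      simp [show ¬i < n by simpa using hi]

theorem mul_add_mul_mem_FSk {k : ℕ} {x : ℕ → ℕ} {c₀ c₁ : ℕ} (h₀ : c₀ < k) (h₁ : c₁ < k)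
    (hne : c₀ * x 0 + c₁ * x 1 ≠ 0) : c₀ * x 0 + c₁ * x 1 ∈ FSk k x := by
  refine ⟨⟨2, ![c₀, c₁], fun i => ?_, by simp [Fin.sum_univ_two]⟩, hne⟩
  fin_cases i <;> simpa

theorem isKIPSet_FSk_pow (k : ℕ) {N : ℕ} (hN : 1 < N) : IsKIPSet k (FSk k (N ^ ·)) :=
  ⟨_, pow_right_strictMono₀ hN, fun _ => by positivity, subset_rfl⟩

theorem eq_and_eq_of_mul_add_mul_eq {a b k e f g : ℕ} (hab : Nat.Coprime a b) (hb : 0 < b)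
    (hk : k ≤ a + b) (he : e < k) (hf : f < k) (h : a * e + b * f = (a + b) * g) :
    e = g ∧ f = g := by
  have h' : (a : ℤ) * e + b * f = (a + b) * g := by exact_mod_cast h
  have hz : (a : ℤ) * (e - g) = b * (g - f) := by linear_combination h'
  obtain ⟨t, ht⟩ : (b : ℤ) ∣ e - g :=
    (Nat.isCoprime_iff_coprime.2 hab.symm).dvd_of_dvd_mul_left ⟨_, hz⟩
  have hgf : (g : ℤ) - f = a * t := by
    apply mul_left_cancel₀ (show (b : ℤ) ≠ 0 by positivity)
    linear_combination -hz + a * ht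
  -- `e - f = (a + b) t` while `|e - f| < k ≤ a + b`
  have ht0 : t = 0 := by
    have hef : (e : ℤ) - f = (a + b) * t := by linear_combination ht + hgf
    rcases lt_trichotomy t 0 with ht | ht | ht
    · nlinarith
    · exact ht
    · nlinarith
  subst ht0
  omega

theorem eq_of_mem_FSk_pow_of_mul_add_mul_eq {a b k N X Y Z : ℕ} (hab : Nat.Coprime a b)
    (hb : 0 < b) (hk : 0 < k) (hkab : k ≤ a + b) (hN : (a + b) * k ≤ N)
    (hX : X ∈ FSk k (N ^ ·)) (hY : Y ∈ FSk k (N ^ ·)) (hZ : Z ∈ FSk k (N ^ ·))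
    (h : a * X + b * Y = (a + b) * Z) : X = Y ∧ Y = Z := by
  obtain ⟨E, hE, n, hXE⟩ := exists_coeffs_of_mem_FSk hk hX
  obtain ⟨F, hF, m, hYF⟩ := exists_coeffs_of_mem_FSk hk hY
  obtain ⟨G, hG, p, hZG⟩ := exists_coeffs_of_mem_FSk hk hZ
  set M := n + m + p
  rw [hXE M (by omega), hYF M (by omega), hZG M (by omega)] at h ⊢
  have hdigits : ∀ i < M, a * E i + b * F i = (a + b) * G i := by
    refine fun i hi => Nat.eq_of_sum_range_mul_pow_eq (N := N) (c := fun i => a * E i + b * F i)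
      (d := fun i => (a + b) * G i) (fun i => ?_) (fun i => ?_) ?_ hi
    · calc a * E i + b * F i < a * k + b * k := by
            have := hE i; have := hF i; nlinarith
        _ = (a + b) * k := by ring
        _ ≤ N := hN
    · exact (Nat.mul_lt_mul_left (by omega)).2 (hG i) |>.trans_le hN
    · simp only [add_mul, mul_assoc, sum_add_distrib, ← mul_sum] at h ⊢
      exact h
  have hcoeffs : ∀ i ∈ range M, E i = G i ∧ F i = G i := fun i hi =>
    eq_and_eq_of_mul_add_mul_eq hab hb hkab (hE i) (hF i) (hdigits i (mem_range.1 hi))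
  constructor <;> refine sum_congr rfl fun i hi => ?_ <;> simp [hcoeffs i hi]

theorem exists_solution_of_isKIPSet {a b k : ℕ} {A : Set ℕ} (hb : 0 < b) (hk : a + b < k)
    (hA : IsKIPSet k A) :
    ∃ x ∈ A, ∃ y ∈ A, ∃ z ∈ A, ¬(x = y ∧ y = z) ∧ a * x + b * y = (a + b) * z := by
  obtain ⟨x, -, hx, hsub⟩ := hA
  have hx₀ := hx 0
  have hx₁ := hx 1
  refine ⟨(a + b) * x 0 + b * x 1, hsub (mul_add_mul_mem_FSk hk (by omega) (by positivity)),
    b * x 1, hsub ?_,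
    a * x 0 + b * x 1, hsub (mul_add_mul_mem_FSk (by omega) (by omega) (by positivity)),
    fun h => ?_, by ring⟩
  · simpa using mul_add_mul_mem_FSk (x := x) (c₀ := 0) (by omega) (by omega) (by positivity)
  · nlinarith [h.1]

theorem stmt13_general (a b : ℕ) (hb : 0 < b) (hab : Nat.gcd a b = 1)
    (k : ℕ) (hk : 2 ≤ k) :
    (∀ A : Set ℕ, IsKIPSet k A →
      ∃ x ∈ A, ∃ y ∈ A, ∃ z ∈ A,
        ¬(x = y ∧ y = z) ∧ a * x + b * y = (a + b) * z) ↔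
    a + b < k := by
  refine ⟨fun H => ?_, fun hkab A hA => exists_solution_of_isKIPSet hb hkab hA⟩
  by_contra! hkab
  have hN : 1 < (a + b) * k := by nlinarith
  obtain ⟨X, hX, Y, hY, Z, hZ, hne, h⟩ := H _ (isKIPSet_FSk_pow k hN)
  exact hne (eq_of_mem_FSk_pow_of_mul_add_mul_eq hab hb (by omega) hkab le_rfl hX hY hZ h)

/-- For coprime positive integers `a, b` and `k ≥ 2`: every `k`-IP-set contains a
non-trivial (not all entries equal) solution to `a·x + b·y = (a+b)·z` iff
`k > a + b`. -/
theorem stmt13 (a b : ℕ) (ha : 0 < a) (hb : 0 < b) (hab : Nat.gcd a b = 1)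
    (k : ℕ) (hk : 2 ≤ k) :
    (∀ A : Set ℕ, IsKIPSet k A →
      ∃ x ∈ A, ∃ y ∈ A, ∃ z ∈ A,
        ¬(x = y ∧ y = z) ∧ a * x + b * y = (a + b) * z) ↔
    a + b < k :=
  stmt13_general a b hb hab k hk
end

section
/- Let A be an l × n integer matrix. The following are equivalent: (1) for every finite coloring of ℕ there exist x_1,...,x_n ∈ ℕ, all of the same color, with x_1 a_1 + ⋯ + x_n a_n = 0 where a_1,...,a_n are the columns of A; (2) for every ĪP-set Y and every finite coloring of Y, there exist x_1,...,x_n ∈ Y, all of the same color, with x_1 a_1 + ⋯ + x_n a_n = 0. -/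
/-!
By compactness of the space of `r`-colorings of `ℕ`, partition regularity of `A x = 0` gives a
bound `K` such that every `r`-coloring has a monochromatic solution in `[1, K]`. An `ĪP`-set
generated by `x` contains every multiple `k * x (K + 1)` with `1 ≤ k ≤ K` (take `ε (K + 1) = k`
and all other `εᵢ = 0`); pulling the coloring back along `m ↦ m * x (K + 1)` and scaling a bounded
monochromatic solution by `x (K + 1)` gives a monochromatic solution inside the `ĪP`-set.
Conversely, the positive integers themselves form an `ĪP`-set.
-/

/-- `FSbar x` is the set `{∑_{i=1}^N εᵢ xᵢ : N ∈ ℕ, εᵢ ∈ {0,…,i-1}} \ {0}`. -/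
def FSbar (x : ℕ → ℕ) : Set ℕ :=
  {s | ∃ N : ℕ, 0 < N ∧ ∃ ε : ℕ → ℕ, (∀ i ∈ Finset.Icc 1 N, ε i < i) ∧
    s = ∑ i ∈ Finset.Icc 1 N, ε i * x i} \ {0}

/-- An `ĪP`-set: a subset of `ℕ` containing `FSbar x` for some strictly increasing
sequence `x` of positive integers. -/
def IsIPbarSet (A : Set ℕ) : Prop :=
  ∃ x : ℕ → ℕ, StrictMono x ∧ (∀ i, 0 < x i) ∧ FSbar x ⊆ A

theorem exists_bound_of_forall_coloring {ι κ : Type*} [Finite ι] [Finite κ]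
    (P : (ι → ℕ) → Prop) (h : ∀ c : ℕ → κ, ∃ x, P x ∧ ∀ i j, c (x i) = c (x j)) :
    ∃ K, ∀ c : ℕ → κ, ∃ x, P x ∧ (∀ i, x i ≤ K) ∧ ∀ i j, c (x i) = c (x j) := by
  let _ : TopologicalSpace κ := ⊥
  have _ : DiscreteTopology κ := ⟨rfl⟩
  let U : ℕ → Set (ℕ → κ) := fun K =>
    {c | ∃ x, P x ∧ (∀ i, x i ≤ K) ∧ ∀ i j, c (x i) = c (x j)}
  have hU_open : ∀ K, IsOpen (U K) := by
    intro K
    have hU : U K = ⋃ x ∈ {x | P x ∧ ∀ i, x i ≤ K}, ⋂ i, ⋂ j, {c | c (x i) = c (x j)} := by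
      ext c
      simp [U, and_assoc]
    rw [hU]
    refine isOpen_biUnion fun x _ => isOpen_iInter_of_finite fun i =>
      isOpen_iInter_of_finite fun j => ?_
    change IsOpen ((fun c : ℕ → κ => (c (x i), c (x j))) ⁻¹' {p | p.1 = p.2})
    exact (isOpen_discrete _).preimage (by fun_prop)
  have hU_mono : Monotone U := fun K K' hK c ⟨x, hP, hx, hc⟩ =>
    ⟨x, hP, fun i => (hx i).trans hK, hc⟩
  have hU_cover : Set.univ ⊆ ⋃ K, U K := fun c _ => by
    obtain ⟨x, hP, hc⟩ := h c
    obtain ⟨K, hK⟩ := (Set.finite_range x).bddAbove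
    exact Set.mem_iUnion.2 ⟨K, x, hP, fun i => hK ⟨i, rfl⟩, hc⟩
  obtain ⟨K, hK⟩ := isCompact_univ.elim_directed_cover U hU_open hU_cover hU_mono.directed_le
  exact ⟨K, fun c => hK (Set.mem_univ c)⟩

theorem mul_mem_FSbar {x : ℕ → ℕ} {k N : ℕ} (hk : 0 < k) (hkN : k < N) (hx : 0 < x N) :
    k * x N ∈ FSbar x := by
  refine ⟨⟨N, by omega, fun i => if i = N then k else 0, fun i hi => ?_, ?_⟩, ?_⟩
  · have := (Finset.mem_Icc.1 hi).1
    dsimp only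
    split_ifs <;> omega
  · simp only [ite_mul, zero_mul, Finset.sum_ite_eq', Finset.mem_Icc]
    simp [show 1 ≤ N by omega]
  · simpa using ⟨hk.ne', hx.ne'⟩

theorem IsIPbarSet.exists_mul_mem {Y : Set ℕ} (hY : IsIPbarSet Y) (K : ℕ) :
    ∃ d, ∀ k, 0 < k → k ≤ K → k * d ∈ Y := by
  obtain ⟨x, -, hx_pos, hxY⟩ := hY
  exact ⟨x (K + 1), fun k hk hkK =>
    hxY (mul_mem_FSbar hk (Nat.lt_succ_of_le hkK) (hx_pos _))⟩

theorem isIPbarSet_setOf_pos : IsIPbarSet {m | 0 < m} :=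
  ⟨Nat.succ, fun _ _ => Nat.succ_lt_succ, Nat.succ_pos, fun _ hs => Nat.pos_of_ne_zero hs.2⟩

/-- The system `A x = 0` (columns `aᵢ = A · i`) is partition regular on the positive
integers iff it is partition regular on every `ĪP`-set. -/
theorem stmt17 (l n : ℕ) (A : Matrix (Fin l) (Fin n) ℤ) :
    (∀ (r : ℕ) (c : ℕ → Fin r),
      ∃ x : Fin n → ℕ, (∀ i, 0 < x i) ∧ (∀ i i', c (x i) = c (x i')) ∧
        ∀ t : Fin l, ∑ i, (x i : ℤ) * A t i = 0) ↔
    (∀ Y : Set ℕ, IsIPbarSet Y → ∀ (r : ℕ) (c : ℕ → Fin r),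
      ∃ x : Fin n → ℕ, (∀ i, x i ∈ Y) ∧ (∀ i i', c (x i) = c (x i')) ∧
        ∀ t : Fin l, ∑ i, (x i : ℤ) * A t i = 0) := by
  refine ⟨fun hPR Y hY r c => ?_, fun hPR r c => hPR _ isIPbarSet_setOf_pos r c⟩
  obtain ⟨K, hK⟩ := exists_bound_of_forall_coloring
    (fun y : Fin n → ℕ => (∀ i, 0 < y i) ∧ ∀ t, ∑ i, (y i : ℤ) * A t i = 0)
    fun c => (hPR r c).imp fun _ ⟨hpos, hmono, hsol⟩ => ⟨⟨hpos, hsol⟩, hmono⟩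
  obtain ⟨d, hdY⟩ := hY.exists_mul_mem K
  obtain ⟨y, ⟨hy_pos, hy_sol⟩, hy_le, hy_mono⟩ := hK fun m => c (m * d)
  refine ⟨fun i => y i * d, fun i => hdY _ (hy_pos i) (hy_le i), hy_mono, fun t => ?_⟩
  calc ∑ i, ((y i * d : ℕ) : ℤ) * A t i = (∑ i, (y i : ℤ) * A t i) * d := by
        rw [Finset.sum_mul]
        refine Finset.sum_congr rfl fun i _ => ?_
        push_cast
        ring
    _ = 0 := by rw [hy_sol t, zero_mul]
end

section
/- The equation x_1 + 2 x_2 + 3 x_3 = 6 x_4 has a non-trivial solution in every 3-IP-set: indeed, if y_1 < y_2 are positive integers, then x_1 = x_2 = 2 y_1, x_3 = 2 y_2, x_4 = y_1 + y_2 are elements of FS^3({y_1, y_2}) satisfying x_1 + 2 x_2 + 3 x_3 = 6 x_4, and (x_1, x_2, x_3, x_4) is not a constant tuple. -/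
/-- `FSkPair k y₁ y₂` is the set `{ε₁ y₁ + ε₂ y₂ : ε₁, ε₂ ∈ {0,…,k-1}} \ {0}`. -/
def FSkPair (k y₁ y₂ : ℕ) : Set ℕ :=
  {s | ∃ ε₁ ε₂ : ℕ, ε₁ < k ∧ ε₂ < k ∧ s = ε₁ * y₁ + ε₂ * y₂} \ {0}

lemma mem_FSk_two (x : ℕ → ℕ) (hx : ∀ i, 0 < x i) (a b : ℕ) (ha : a < 3) (hb : b < 3)
    (hab : ¬(a = 0 ∧ b = 0)) : a * x 0 + b * x 1 ∈ FSk 3 x := by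
  constructor
  · exact ⟨2, ![a, b], by
      refine ⟨fun i => ?_, by simp [Fin.sum_univ_two]⟩
      fin_cases i <;> simpa⟩
  · simp only [Set.mem_singleton_iff]
    intro h
    rcases Nat.eq_zero_of_add_eq_zero_right h with h1
    rcases Nat.eq_zero_of_add_eq_zero_left h with h2
    exact hab ⟨by
      rcases Nat.mul_eq_zero.1 h1 with h | h
      · exact h
      · exact absurd h (hx 0).ne', by
      rcases Nat.mul_eq_zero.1 h2 with h | h
      · exact h
      · exact absurd h (hx 1).ne'⟩

/-- The equation `x₁ + 2x₂ + 3x₃ = 6x₄` has a non-trivial solution in every 3-IP-set;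
indeed, for positive integers `y₁ < y₂`, the values `x₁ = x₂ = 2y₁`, `x₃ = 2y₂`,
`x₄ = y₁ + y₂` lie in `FSkPair 3 y₁ y₂`, solve the equation, and are not all equal. -/
theorem stmt18 :
    (∀ A : Set ℕ, IsKIPSet 3 A →
      ∃ x₁ ∈ A, ∃ x₂ ∈ A, ∃ x₃ ∈ A, ∃ x₄ ∈ A,
        x₁ + 2 * x₂ + 3 * x₃ = 6 * x₄ ∧ ¬(x₁ = x₂ ∧ x₂ = x₃ ∧ x₃ = x₄)) ∧
    (∀ y₁ y₂ : ℕ, 0 < y₁ → y₁ < y₂ →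
      2 * y₁ ∈ FSkPair 3 y₁ y₂ ∧
      2 * y₂ ∈ FSkPair 3 y₁ y₂ ∧
      (y₁ + y₂) ∈ FSkPair 3 y₁ y₂ ∧
      2 * y₁ + 2 * (2 * y₁) + 3 * (2 * y₂) = 6 * (y₁ + y₂) ∧
      ¬(2 * y₁ = 2 * y₁ ∧ 2 * y₁ = 2 * y₂ ∧ 2 * y₂ = y₁ + y₂)) := by
  constructor
  · rintro A ⟨x, hmono, hpos, hsub⟩
    have hlt : x 0 < x 1 := hmono (by norm_num)
    refine ⟨2 * x 0, hsub ?_, 2 * x 0, hsub ?_, 2 * x 1, hsub ?_, x 0 + x 1, hsub ?_, by ring, ?_⟩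
    · simpa using mem_FSk_two x hpos 2 0 (by norm_num) (by norm_num) (by simp)
    · simpa using mem_FSk_two x hpos 2 0 (by norm_num) (by norm_num) (by simp)
    · simpa using mem_FSk_two x hpos 0 2 (by norm_num) (by norm_num) (by simp)
    · simpa using mem_FSk_two x hpos 1 1 (by norm_num) (by norm_num) (by simp)
    · rintro ⟨-, h2, -⟩
      omega
  · intro y₁ y₂ h1 h2
    refine ⟨⟨⟨2, 0, by norm_num, by norm_num, by ring⟩, by simp; omega⟩,
      ⟨⟨0, 2, by norm_num, by norm_num, by ring⟩, by simp; omega⟩,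
      ⟨⟨1, 1, by norm_num, by norm_num, by ring⟩, by simp; omega⟩,
      by ring, by omega⟩
end
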